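/- Let (F_i) be the Fibonacci sequence with F_1 = F_2 = 1 and F_{i+2} = F_{i+1} + F_i. Then for every positive odd integer k, the strict inequality 1/F_k < Σ_{i=k+2}^∞ 1/F_i holds. -/

import Mathlib

/-!
For odd `n`, Cassini's identity `F_n F_{n+2} = F_{n+1}^2 + 1` yields
`1/F_n - 1/F_{n+2} < 1/F_{n+2} + 1/F_{n+3}`. Summing over `n = k, k+2, k+4, …`, the left-hand
sides telescope to `1/F_k`, while the right-hand sides add up to `∑_{i ≥ k+2} 1/F_i` taken in
consecutive pairs; this tail converges because `F_{n+2} ≥ φ^n`.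
-/
open Nat Real Filter Topology Finset

theorem Nat.fib_mul_fib_add_two_of_odd {n : ℕ} (hn : Odd n) :
    fib n * fib (n + 2) = fib (n + 1) ^ 2 + 1 := by
  have h := Int.fib_succ_mul_fib_pred_sub_fib_sq ((n + 1 : ℕ) : ℤ)
  rw [Int.natAbs_natCast, hn.add_one.neg_one_pow] at h
  zify
  simp only [← Int.fib_natCast] at h ⊢
  push_cast at h ⊢
  rw [add_sub_cancel_right, add_assoc, one_add_one_eq_two] at h
  linear_combination h

theorem goldenRatio_pow_le_fib_add_two (n : ℕ) : goldenRatio ^ n ≤ fib (n + 2) := by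
  refine le_of_mul_le_mul_left ?_ goldenRatio_pos
  calc goldenRatio * goldenRatio ^ n = goldenRatio * fib (n + 1) + fib n := by
        rw [goldenRatio_mul_fib_succ_add_fib]; ring
    _ ≤ goldenRatio * fib (n + 1) + goldenRatio * fib n := by
        gcongr; exact le_mul_of_one_le_left (by positivity) one_lt_goldenRatio.le
    _ = goldenRatio * fib (n + 2) := by rw [fib_add_two]; push_cast; ring

theorem summable_one_div_fib : Summable fun n => (1 : ℝ) / fib n := by
  rw [← summable_nat_add_iff 2]
  refine .of_nonneg_of_le (fun n => by positivity) (fun n => ?_)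
    (summable_geometric_of_lt_one (inv_nonneg.2 goldenRatio_pos.le)
      (inv_lt_one_of_one_lt₀ one_lt_goldenRatio))
  rw [one_div, inv_pow]
  exact inv_anti₀ (by positivity) (goldenRatio_pow_le_fib_add_two n)

theorem one_div_sub_one_div_add_lt {a b : ℝ} (ha : 0 < a) (hb : 0 < b)
    (h : b ^ 2 < a * (a + b)) :
    1 / a - 1 / (a + b) < 1 / (a + b) + 1 / (a + 2 * b) := by
  rw [div_sub_div _ _ ha.ne' (by positivity), div_add_div _ _ (by positivity) (by positivity),
    div_lt_div_iff₀ (by positivity) (by positivity)]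
  -- after cancelling `a + b` this is `b * (a + 2 * b) < a * (2 * a + 3 * b)`, i.e. `h`
  nlinarith [mul_pos ha hb, mul_pos (mul_pos ha hb) (add_pos ha hb)]

theorem one_div_fib_sub_lt_of_odd {n : ℕ} (hn : Odd n) :
    (1 : ℝ) / fib n - 1 / fib (n + 2) < 1 / fib (n + 2) + 1 / fib (n + 3) := by
  have hcas : (fib (n + 1) : ℝ) ^ 2 < fib n * (fib n + fib (n + 1)) := by
    rw [← Nat.cast_add, ← fib_add_two]
    exact_mod_cast (fib_mul_fib_add_two_of_odd hn ▸ lt_add_one _ :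
      fib (n + 1) ^ 2 < fib n * fib (n + 2))
  have h2 : (fib (n + 2) : ℝ) = fib n + fib (n + 1) := by exact_mod_cast fib_add_two
  have h3 : (fib (n + 3) : ℝ) = fib n + 2 * fib (n + 1) := by
    rw [show n + 3 = (n + 1) + 2 by rfl, fib_add_two]; push_cast [h2]; ring
  rw [h2, h3]
  exact one_div_sub_one_div_add_lt (by exact_mod_cast fib_pos.2 hn.pos)
    (by exact_mod_cast fib_pos.2 n.succ_pos) hcas

theorem Antitone.hasSum_sub_succ {u : ℕ → ℝ} (hu : Antitone u) (h0 : Tendsto u atTop (𝓝 0)) :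
    HasSum (fun n => u n - u (n + 1)) (u 0) := by
  rw [hasSum_iff_tendsto_nat_of_nonneg fun n => sub_nonneg.2 (hu n.le_succ)]
  simp_rw [sum_range_sub']
  simpa using tendsto_const_nhds.sub h0

theorem Summable.hasSum_add_pairs {E : Type*} [NormedAddCommGroup E] [CompleteSpace E]
    {f : ℕ → E} (hf : Summable f) : HasSum (fun n => f (2 * n) + f (2 * n + 1)) (∑' n, f n) := by
  have he := hf.comp_injective (mul_right_injective₀ (two_ne_zero' ℕ))
  have ho := hf.comp_injective
    ((add_left_injective 1).comp (mul_right_injective₀ (two_ne_zero' ℕ)))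
  rw [← tsum_even_add_odd he ho]
  exact he.hasSum.add ho.hasSum

theorem one_div_fib_lt_tsum_of_odd {k : ℕ} (hk : Odd k) :
    (1 : ℝ) / fib k < ∑' i, (1 : ℝ) / fib (k + 2 + i) := by
  have hk₀ := hk.pos
  set u : ℕ → ℝ := fun j => 1 / fib (k + 2 * j)
  have hu : Antitone u := antitone_nat_of_succ_le fun j =>
    one_div_le_one_div_of_le (by exact_mod_cast fib_pos.2 (by omega)) (by gcongr; omega)
  have hu_lim : Tendsto u atTop (𝓝 0) := summable_one_div_fib.tendsto_atTop_zero.comp <|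
    tendsto_atTop_mono (fun j => show j ≤ k + 2 * j by omega) tendsto_id
  have htail : Summable fun i => (1 : ℝ) / fib (k + 2 + i) := by
    simpa only [add_comm _ (k + 2)] using (summable_nat_add_iff (k + 2)).2 summable_one_div_fib
  have hstep : ∀ j, u j - u (j + 1) < 1 / fib (k + 2 + 2 * j) + 1 / fib (k + 2 + (2 * j + 1)) :=
    fun j => by
      convert one_div_fib_sub_lt_of_odd (hk.add_even (even_two_mul j)) using 5 <;> ring
  simpa [u] using hasSum_lt (fun j => (hstep j).le) (hstep 0) (hu.hasSum_sub_succ hu_lim)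
    htail.hasSum_add_pairs

theorem eq_fib_of_recurrence (F : ℕ → ℕ) (h1 : F 1 = 1) (h2 : F 2 = 1)
    (hrec : ∀ i, 1 ≤ i → F (i + 2) = F (i + 1) + F i) {n : ℕ} (hn : 1 ≤ n) : F n = fib n := by
  obtain ⟨m, rfl⟩ := Nat.exists_eq_add_of_le' hn
  induction m using Nat.twoStepInduction with
  | zero => exact h1
  | one => exact h2
  | more m ih₁ ih₂ =>
    rw [show m + 2 + 1 = m + 1 + 2 from rfl, hrec (m + 1) (by omega), ih₁ (by omega),
      ih₂ (by omega), fib_add_two (n := m + 1), add_comm]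

theorem stmt_12_general (F : ℕ → ℕ) (h1 : F 1 = 1) (h2 : F 2 = 1)
    (hrec : ∀ i, 1 ≤ i → F (i + 2) = F (i + 1) + F i)
    (k : ℕ) (hodd : Odd k) :
    (1 : ℝ) / (F k : ℝ) < ∑' i : ℕ, (1 : ℝ) / (F (k + 2 + i) : ℝ) := by
  have hF : ∀ n, 1 ≤ n → F n = fib n := fun n => eq_fib_of_recurrence F h1 h2 hrec
  calc (1 : ℝ) / F k = 1 / fib k := by rw [hF k hodd.pos]
    _ < ∑' i, (1 : ℝ) / fib (k + 2 + i) := one_div_fib_lt_tsum_of_odd hodd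
    _ = ∑' i, (1 : ℝ) / F (k + 2 + i) := tsum_congr fun i => by rw [hF _ (by omega)]

/-- For the Fibonacci sequence, if `k` is a positive odd integer then
`1/F_k < Σ_{i=k+2}^∞ 1/F_i`. -/
theorem stmt_12 (F : ℕ → ℕ) (h1 : F 1 = 1) (h2 : F 2 = 1)
    (hrec : ∀ i, 1 ≤ i → F (i + 2) = F (i + 1) + F i)
    (k : ℕ) (hk : 1 ≤ k) (hodd : Odd k) :
    (1 : ℝ) / (F k : ℝ) < ∑' i : ℕ, (1 : ℝ) / (F (k + 2 + i) : ℝ) :=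
  stmt_12_general F h1 h2 hrec k hodd
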